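/- arXiv:1208.5543 — 2 statements merged into one kernel-verified Lean document; each statement's English description precedes it below -/
import Mathlib

section
/- The Lie bracket on the direct sum ⊕_n O(n) of a graded operad O, defined as the graded commutator of a∘b = Σ_i a∘_i b, descends to a well-defined Lie bracket on the direct sum of the coinvariants ⊕_n O(n)_{S_n}, via [[a],[b]] := [a∘b]. -/
/-- The submodule of a `G`-module spanned by the elements `σ•y - y`; the quotient by it
is the module of coinvariants. -/
def coinvSub (k : Type*) [Field k] (M : Type*) [AddCommGroup M] [Module k M]
    (G : Type*) [Group G] [DistribMulAction G M] : Submodule k M :=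
  Submodule.span k {x : M | ∃ (σ : G) (y : M), x = σ • y - y}

/-- For an operad `O` in graded vector spaces over a field of characteristic `0`, with
`S_n`-equivariant partial compositions (equivariance in the form: for `σ ∈ S_n`,
`σ' ∈ S_m` and a slot `i` there is a permutation `ρ ∈ S_{n+m-1}` with
`(σa) ∘_i (σ'b) = ρ • (a ∘_{σ⁻¹ i} b)`), the operation `a ∘ b = ∑_i a ∘_i b`
descends to a well-defined operation on the coinvariants `O(n)_{S_n}`, via
`[a] ∘ [b] = [a ∘ b]`; hence the commutator Lie bracket descends as well. -/
theorem operad_bracket_descends_to_coinvariants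
    {k : Type*} [Field k] [CharZero k]
    (O : ℕ → Type*) [∀ n, AddCommGroup (O n)] [∀ n, Module k (O n)]
    [∀ n, DistribMulAction (Equiv.Perm (Fin n)) (O n)]
    (comp : ∀ n m : ℕ, Fin n → O n →ₗ[k] O m →ₗ[k] O (n + m - 1))
    (hequiv : ∀ (n m : ℕ) (σ : Equiv.Perm (Fin n)) (σ' : Equiv.Perm (Fin m)) (i : Fin n),
      ∃ ρ : Equiv.Perm (Fin (n + m - 1)), ∀ (a : O n) (b : O m),
        comp n m i (σ • a) (σ' • b) = ρ • comp n m (σ⁻¹ i) a b) :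
    ∀ n m : ℕ,
      ∃ C : (O n ⧸ coinvSub k (O n) (Equiv.Perm (Fin n))) →
            (O m ⧸ coinvSub k (O m) (Equiv.Perm (Fin m))) →
            (O (n + m - 1) ⧸ coinvSub k (O (n + m - 1)) (Equiv.Perm (Fin (n + m - 1)))),
        ∀ (a : O n) (b : O m),
          C (Submodule.Quotient.mk a) (Submodule.Quotient.mk b)
            = Submodule.Quotient.mk (∑ i : Fin n, comp n m i a b) := by
  intro n m
  classical
  set Sn := coinvSub k (O n) (Equiv.Perm (Fin n)) with hSn
  set Sm := coinvSub k (O m) (Equiv.Perm (Fin m)) with hSm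
  set St := coinvSub k (O (n + m - 1)) (Equiv.Perm (Fin (n + m - 1))) with hSt
  let T : O n →ₗ[k] O m →ₗ[k] O (n + m - 1) ⧸ St :=
    (∑ i : Fin n, comp n m i).compr₂ St.mkQ
  have hT : ∀ (a : O n) (b : O m),
      T a b = Submodule.Quotient.mk (∑ i : Fin n, comp n m i a b) := by
    intro a b
    simp only [T, LinearMap.compr₂_apply, LinearMap.sum_apply, Submodule.mkQ_apply]
  have hgen : ∀ (ρ : Equiv.Perm (Fin (n + m - 1))) (c : O (n + m - 1)),
      ρ • c - c ∈ St := fun ρ c => Submodule.subset_span ⟨ρ, c, rfl⟩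
  have hleft : ∀ (σ : Equiv.Perm (Fin n)) (y : O n) (b : O m),
      T (σ • y) b = T y b := by
    intro σ y b
    choose ρ hρ using fun i => hequiv n m σ 1 i
    rw [hT, hT, Submodule.Quotient.eq]
    have h1 : ∀ i : Fin n, comp n m i (σ • y) b = ρ i • comp n m (σ⁻¹ i) y b := by
      intro i
      have := hρ i y b
      simpa using this
    have hrw : (∑ i : Fin n, comp n m i (σ • y) b) - ∑ i : Fin n, comp n m i y b
        = ∑ i : Fin n,
            (ρ i • comp n m (σ⁻¹ i) y b - comp n m (σ⁻¹ i) y b) := by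
      rw [Finset.sum_sub_distrib]
      congr 1
      · exact Finset.sum_congr rfl fun i _ => h1 i
      · exact (Equiv.sum_comp σ⁻¹ fun j => comp n m j y b).symm
    rw [hrw]
    exact Submodule.sum_mem _ fun i _ => hgen _ _
  have hright : ∀ (σ' : Equiv.Perm (Fin m)) (a : O n) (y : O m),
      T a (σ' • y) = T a y := by
    intro σ' a y
    choose ρ hρ using fun i => hequiv n m 1 σ' i
    rw [hT, hT, Submodule.Quotient.eq]
    have h1 : ∀ i : Fin n, comp n m i a (σ' • y) = ρ i • comp n m i a y := by
      intro i
      have := hρ i a y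
      simpa using this
    have hrw : (∑ i : Fin n, comp n m i a (σ' • y)) - ∑ i : Fin n, comp n m i a y
        = ∑ i : Fin n, (ρ i • comp n m i a y - comp n m i a y) := by
      rw [Finset.sum_sub_distrib]
      congr 1
      exact Finset.sum_congr rfl fun i _ => by rw [h1 i]
    rw [hrw]
    exact Submodule.sum_mem _ fun i _ => hgen _ _
  have hker1 : Sn ≤ LinearMap.ker T := by
    rw [hSn, coinvSub]
    apply Submodule.span_le.mpr
    rintro x ⟨σ, y, rfl⟩
    simp only [SetLike.mem_coe, LinearMap.mem_ker, map_sub]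
    apply sub_eq_zero_of_eq
    exact LinearMap.ext fun b => hleft σ y b
  let F1 : (O n ⧸ Sn) →ₗ[k] O m →ₗ[k] O (n + m - 1) ⧸ St := Sn.liftQ T hker1
  have hker2 : Sm ≤ LinearMap.ker F1.flip := by
    rw [hSm, coinvSub]
    apply Submodule.span_le.mpr
    rintro x ⟨σ', y, rfl⟩
    simp only [SetLike.mem_coe, LinearMap.mem_ker]
    apply LinearMap.ext
    intro q
    obtain ⟨a, rfl⟩ := Submodule.Quotient.mk_surjective _ q
    have : F1 (Submodule.Quotient.mk a) = T a := rfl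
    simp only [map_sub, LinearMap.sub_apply, LinearMap.flip_apply, this]
    exact sub_eq_zero_of_eq (hright σ' a y)
  let F2 := Sm.liftQ F1.flip hker2
  refine ⟨fun x y => F2 y x, fun a b => ?_⟩
  have h2 : F2 (Submodule.Quotient.mk b) = F1.flip b := rfl
  have h1 : F1 (Submodule.Quotient.mk a) = T a := rfl
  simp only [h2, LinearMap.flip_apply, h1]
  exact hT a b
end

section
/- Let O be an anti-cyclic operad indexed by finite sets, with compositions a ∘_{s,t} b ∈ O((S∖{s}) ⊔ (T∖{t})) satisfying the anti-cyclic symmetry a∘_{s,t}b = −(−1)^{deg(a)deg(b)} b∘_{t,s}a. Define [a⊙b] = Σ_{s∈S, t∈T} a∘_{s,t} b. Then [·⊙·] is graded anti-symmetric and satisfies the graded Jacobi identity: (−1)^{deg(a)deg(c)}[a⊙[b⊙c]] + (−1)^{deg(a)deg(b)}[b⊙[c⊙a]] + (−1)^{deg(c)deg(b)}[c⊙[a⊙b]] = 0. -/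
private lemma erase_sum_ite {M : Type*} [AddCommMonoid M] (X : Finset ℕ) (x : ℕ) (f : ℕ → M) :
    ∑ z ∈ X.erase x, f z = ∑ z ∈ X, if z = x then 0 else f z := by
  rw [← Finset.sum_erase X (f := fun z => if z = x then 0 else f z) (a := x) (by simp)]
  exact Finset.sum_congr rfl fun z hz => (if_neg (Finset.ne_of_mem_erase hz)).symm

private lemma reorder4 {M : Type*} [AddCommMonoid M] (W X Y : Finset ℕ)
    (g : ℕ → ℕ → ℕ → ℕ → M) :
    ∑ w ∈ W, ∑ x ∈ X, ∑ y ∈ Y, ∑ z ∈ X.erase x, g w x y z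
      = ∑ y ∈ Y, ∑ z ∈ X, ∑ x ∈ X.erase z, ∑ w ∈ W, g w x y z := by
  have L : ∑ w ∈ W, ∑ x ∈ X, ∑ y ∈ Y, ∑ z ∈ X.erase x, g w x y z
      = ∑ w ∈ W, ∑ x ∈ X, ∑ y ∈ Y, ∑ z ∈ X, if z = x then 0 else g w x y z :=
    Finset.sum_congr rfl fun w _ => Finset.sum_congr rfl fun x _ =>
      Finset.sum_congr rfl fun y _ => erase_sum_ite X x _
  have R : ∑ y ∈ Y, ∑ z ∈ X, ∑ x ∈ X.erase z, ∑ w ∈ W, g w x y z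
      = ∑ y ∈ Y, ∑ z ∈ X, ∑ x ∈ X, ∑ w ∈ W, if z = x then 0 else g w x y z := by
    refine Finset.sum_congr rfl fun y _ => Finset.sum_congr rfl fun z _ => ?_
    rw [erase_sum_ite X z (fun x => ∑ w ∈ W, g w x y z)]
    refine Finset.sum_congr rfl fun x _ => ?_
    rcases eq_or_ne x z with h | h
    · subst h; simp
    · rw [if_neg h]
      exact Finset.sum_congr rfl fun w _ => (if_neg (Ne.symm h)).symm
  rw [L, R]
  calc ∑ w ∈ W, ∑ x ∈ X, ∑ y ∈ Y, ∑ z ∈ X, (if z = x then 0 else g w x y z)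
      = ∑ x ∈ X, ∑ w ∈ W, ∑ y ∈ Y, ∑ z ∈ X, (if z = x then 0 else g w x y z) :=
        Finset.sum_comm
    _ = ∑ x ∈ X, ∑ y ∈ Y, ∑ w ∈ W, ∑ z ∈ X, (if z = x then 0 else g w x y z) :=
        Finset.sum_congr rfl fun x _ => Finset.sum_comm
    _ = ∑ y ∈ Y, ∑ x ∈ X, ∑ w ∈ W, ∑ z ∈ X, (if z = x then 0 else g w x y z) :=
        Finset.sum_comm
    _ = ∑ y ∈ Y, ∑ x ∈ X, ∑ z ∈ X, ∑ w ∈ W, (if z = x then 0 else g w x y z) :=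
        Finset.sum_congr rfl fun y _ => Finset.sum_congr rfl fun x _ => Finset.sum_comm
    _ = ∑ y ∈ Y, ∑ z ∈ X, ∑ x ∈ X, ∑ w ∈ W, (if z = x then 0 else g w x y z) :=
        Finset.sum_congr rfl fun y _ => Finset.sum_comm

private lemma not_mem_erase_union (X Y : Finset ℕ) (x y : ℕ) (hxY : x ∉ Y) :
    x ∉ (X.erase x) ∪ (Y.erase y) := by
  intro hmem
  rcases Finset.mem_union.mp hmem with h | h
  · exact (Finset.mem_erase.mp h).1 rfl
  · exact hxY (Finset.mem_of_mem_erase h)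

private lemma not_mem_union_erase (X Y : Finset ℕ) (x y : ℕ) (hyX : y ∉ X) :
    y ∉ (X.erase x) ∪ (Y.erase y) := by
  intro hmem
  rcases Finset.mem_union.mp hmem with h | h
  · exact hyX (Finset.mem_of_mem_erase h)
  · exact (Finset.mem_erase.mp h).1 rfl

/-- The bracket `[a ⊙ b] = ∑_{s ∈ S, t ∈ T} a ∘_{s,t} b` of a (anti-)cyclic operad
indexed by finite sets. -/
def glueSum {k V : Type*} [Field k] [AddCommGroup V] [Module k V]
    (glue : ℕ → ℕ → V →ₗ[k] V →ₗ[k] V) (S T : Finset ℕ) (a b : V) : V :=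
  ∑ s ∈ S, ∑ t ∈ T, glue s t a b

/-- For an anti-cyclic operad in graded vector spaces (components `H S d` indexed by
finite flag sets `S` and degrees `d`, gluings `glue s t` with the anti-cyclic symmetry
`a ∘_{s,t} b = -(-1)^{deg a · deg b} b ∘_{t,s} a` and the operadic associativity), the
bracket `[a ⊙ b] = ∑_{s,t} a ∘_{s,t} b` is graded anti-symmetric and satisfies the
graded Jacobi identity. -/
theorem anticyclic_bracket_antisymmetric_and_jacobi
    {k V : Type*} [Field k] [CharZero k] [AddCommGroup V] [Module k V]
    (H : Finset ℕ → ℤ → Submodule k V)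
    (glue : ℕ → ℕ → V →ₗ[k] V →ₗ[k] V)
    (hcl : ∀ (S T : Finset ℕ) (d e : ℤ) (a b : V), a ∈ H S d → b ∈ H T e →
      ∀ s ∈ S, ∀ t ∈ T, glue s t a b ∈ H ((S.erase s) ∪ (T.erase t)) (d + e))
    (hvan₁ : ∀ (S : Finset ℕ) (d : ℤ) (a : V), a ∈ H S d →
      ∀ s ∉ S, ∀ (t : ℕ) (b : V), glue s t a b = 0)
    (hvan₂ : ∀ (T : Finset ℕ) (e : ℤ) (b : V), b ∈ H T e →
      ∀ t ∉ T, ∀ (s : ℕ) (a : V), glue s t a b = 0)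
    (hanti : ∀ (S T : Finset ℕ) (d e : ℤ) (a b : V), a ∈ H S d → b ∈ H T e →
      ∀ s t, glue s t a b = -(((-1 : k) ^ (d * e)) • glue t s b a))
    (hchain : ∀ (S T U : Finset ℕ) (d e f : ℤ) (a b c : V),
      a ∈ H S d → b ∈ H T e → c ∈ H U f →
      Disjoint S T → Disjoint S U → Disjoint T U →
      ∀ s ∈ S, ∀ t' ∈ T, ∀ t ∈ T, t ≠ t' → ∀ u ∈ U,
        glue t u (glue s t' a b) c = glue s t' a (glue t u b c))
    (hpar : ∀ (S T U : Finset ℕ) (d e f : ℤ) (a b c : V),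
      a ∈ H S d → b ∈ H T e → c ∈ H U f →
      Disjoint S T → Disjoint S U → Disjoint T U →
      ∀ s ∈ S, ∀ s' ∈ S, s ≠ s' → ∀ t ∈ T, ∀ u ∈ U,
        glue s' u (glue s t a b) c = ((-1 : k) ^ (e * f)) • glue s t (glue s' u a c) b) :
    ∀ (S T U : Finset ℕ) (d e f : ℤ) (a b c : V),
      a ∈ H S d → b ∈ H T e → c ∈ H U f →
      Disjoint S T → Disjoint S U → Disjoint T U →
      (glueSum glue S T a b = -(((-1 : k) ^ (d * e)) • glueSum glue T S b a)) ∧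
      (((-1 : k) ^ (d * f)) • glueSum glue S (T ∪ U) a (glueSum glue T U b c)
        + ((-1 : k) ^ (d * e)) • glueSum glue T (U ∪ S) b (glueSum glue U S c a)
        + ((-1 : k) ^ (f * e)) • glueSum glue U (S ∪ T) c (glueSum glue S T a b)
        = 0) := by
  intro S T U d e f a b c ha hb hc hST hSU hTU
  have hne : (-1 : k) ≠ 0 := by norm_num
  have haux : ∀ m n : ℤ, (-1:k)^m * (-1:k)^n = (-1:k)^(m+n) := fun m n =>
    (zpow_add₀ hne m n).symm
  have hsq : ∀ m : ℤ, (-1:k)^(2*m) = 1 := fun m => by rw [zpow_mul]; norm_num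
  have hbc : ∀ t ∈ T, ∀ u ∈ U, glue t u b c ∈ H ((T.erase t) ∪ (U.erase u)) (e+f) :=
    fun t ht u hu => hcl T U e f b c hb hc t ht u hu
  have hca : ∀ u ∈ U, ∀ s ∈ S, glue u s c a ∈ H ((U.erase u) ∪ (S.erase s)) (f+d) :=
    fun u hu s hs => hcl U S f d c a hc ha u hu s hs
  have hab : ∀ s ∈ S, ∀ t ∈ T, glue s t a b ∈ H ((S.erase s) ∪ (T.erase t)) (d+e) :=
    fun s hs t ht => hcl S T d e a b ha hb s hs t ht
  constructor
  · -- antisymmetry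
    simp only [glueSum]
    calc ∑ s ∈ S, ∑ t ∈ T, glue s t a b
        = ∑ s ∈ S, ∑ t ∈ T, -(((-1:k)^(d*e)) • glue t s b a) :=
          Finset.sum_congr rfl fun s _ => Finset.sum_congr rfl fun t _ =>
            hanti S T d e a b ha hb s t
      _ = -(((-1:k)^(d*e)) • ∑ s ∈ S, ∑ t ∈ T, glue t s b a) := by
          simp only [Finset.sum_neg_distrib, ← Finset.smul_sum]
      _ = -(((-1:k)^(d*e)) • ∑ t ∈ T, ∑ s ∈ S, glue t s b a) := by rw [Finset.sum_comm]
  · -- Jacobi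
    have expand1 : glueSum glue S (T ∪ U) a (glueSum glue T U b c)
        = (∑ s ∈ S, ∑ x ∈ T, ∑ t ∈ T, ∑ u ∈ U, glue s x a (glue t u b c))
          + (∑ s ∈ S, ∑ x ∈ U, ∑ t ∈ T, ∑ u ∈ U, glue s x a (glue t u b c)) := by
      simp only [glueSum, map_sum, Finset.sum_union hTU, Finset.sum_add_distrib]
    have expand2 : glueSum glue T (U ∪ S) b (glueSum glue U S c a)
        = (∑ t ∈ T, ∑ x ∈ U, ∑ u ∈ U, ∑ s ∈ S, glue t x b (glue u s c a))
          + (∑ t ∈ T, ∑ x ∈ S, ∑ u ∈ U, ∑ s ∈ S, glue t x b (glue u s c a)) := by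
      simp only [glueSum, map_sum, Finset.sum_union hSU.symm, Finset.sum_add_distrib]
    have expand3 : glueSum glue U (S ∪ T) c (glueSum glue S T a b)
        = (∑ u ∈ U, ∑ x ∈ S, ∑ s ∈ S, ∑ t ∈ T, glue u x c (glue s t a b))
          + (∑ u ∈ U, ∑ x ∈ T, ∑ s ∈ S, ∑ t ∈ T, glue u x c (glue s t a b)) := by
      simp only [glueSum, map_sum, Finset.sum_union hST, Finset.sum_add_distrib]
    -- canonical quadruple sums
    set A := ∑ s ∈ S, ∑ t ∈ T, ∑ t' ∈ T.erase t, ∑ u ∈ U, glue t' u (glue s t a b) c with hAdef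
    set B := ∑ t ∈ T, ∑ u ∈ U, ∑ u' ∈ U.erase u, ∑ s ∈ S, glue u' s (glue t u b c) a with hBdef
    set C := ∑ u ∈ U, ∑ s ∈ S, ∑ s' ∈ S.erase s, ∑ t ∈ T, glue s' t (glue u s c a) b with hCdef
    have hP1 : ∑ s ∈ S, ∑ x ∈ T, ∑ t ∈ T, ∑ u ∈ U, glue s x a (glue t u b c) = A := by
      refine Finset.sum_congr rfl fun s hs => Finset.sum_congr rfl fun t₁ ht₁ => ?_
      rw [show (∑ t ∈ T, ∑ u ∈ U, glue s t₁ a (glue t u b c))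
          = ∑ t ∈ T.erase t₁, ∑ u ∈ U, glue s t₁ a (glue t u b c) from
        (Finset.sum_erase T (Finset.sum_eq_zero fun u hu =>
          hvan₂ _ _ _ (hbc t₁ ht₁ u hu) t₁
            (not_mem_erase_union T U t₁ u (Finset.disjoint_left.mp hTU ht₁)) s a)).symm]
      refine Finset.sum_congr rfl fun t₂ ht₂ => Finset.sum_congr rfl fun u hu => ?_
      obtain ⟨hne2, ht₂T⟩ := Finset.mem_erase.mp ht₂
      exact (hchain S T U d e f a b c ha hb hc hST hSU hTU s hs t₁ ht₁ t₂ ht₂T hne2 u hu).symm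
    have hQ1 : ∑ t ∈ T, ∑ x ∈ U, ∑ u ∈ U, ∑ s ∈ S, glue t x b (glue u s c a) = B := by
      refine Finset.sum_congr rfl fun t ht => Finset.sum_congr rfl fun u₁ hu₁ => ?_
      rw [show (∑ u ∈ U, ∑ s ∈ S, glue t u₁ b (glue u s c a))
          = ∑ u ∈ U.erase u₁, ∑ s ∈ S, glue t u₁ b (glue u s c a) from
        (Finset.sum_erase U (Finset.sum_eq_zero fun s hs =>
          hvan₂ _ _ _ (hca u₁ hu₁ s hs) u₁
            (not_mem_erase_union U S u₁ s (Finset.disjoint_right.mp hSU hu₁)) t b)).symm]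
      refine Finset.sum_congr rfl fun u₂ hu₂ => Finset.sum_congr rfl fun s hs => ?_
      obtain ⟨hne2, hu₂U⟩ := Finset.mem_erase.mp hu₂
      exact (hchain T U S e f d b c a hb hc ha hTU hST.symm hSU.symm
        t ht u₁ hu₁ u₂ hu₂U hne2 s hs).symm
    have hR1 : ∑ u ∈ U, ∑ x ∈ S, ∑ s ∈ S, ∑ t ∈ T, glue u x c (glue s t a b) = C := by
      refine Finset.sum_congr rfl fun u hu => Finset.sum_congr rfl fun s₁ hs₁ => ?_
      rw [show (∑ s ∈ S, ∑ t ∈ T, glue u s₁ c (glue s t a b))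
          = ∑ s ∈ S.erase s₁, ∑ t ∈ T, glue u s₁ c (glue s t a b) from
        (Finset.sum_erase S (Finset.sum_eq_zero fun t ht =>
          hvan₂ _ _ _ (hab s₁ hs₁ t ht) s₁
            (not_mem_erase_union S T s₁ t (Finset.disjoint_left.mp hST hs₁)) u c)).symm]
      refine Finset.sum_congr rfl fun s₂ hs₂ => Finset.sum_congr rfl fun t ht => ?_
      obtain ⟨hne2, hs₂S⟩ := Finset.mem_erase.mp hs₂
      exact (hchain U S T f d e c a b hc ha hb hSU.symm hTU.symm hST
        u hu s₁ hs₁ s₂ hs₂S hne2 t ht).symm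
    have hP2 : ∑ s ∈ S, ∑ x ∈ U, ∑ t ∈ T, ∑ u ∈ U, glue s x a (glue t u b c)
        = -(((-1:k)^(d*(e+f))) • B) := by
      have step1 : ∑ s ∈ S, ∑ x ∈ U, ∑ t ∈ T, ∑ u ∈ U, glue s x a (glue t u b c)
          = ∑ s ∈ S, ∑ u₁ ∈ U, ∑ t ∈ T, ∑ u₂ ∈ U.erase u₁,
              -(((-1:k)^(d*(e+f))) • glue u₁ s (glue t u₂ b c) a) := by
        refine Finset.sum_congr rfl fun s hs => Finset.sum_congr rfl fun u₁ hu₁ =>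
          Finset.sum_congr rfl fun t ht => ?_
        rw [show (∑ u ∈ U, glue s u₁ a (glue t u b c))
            = ∑ u ∈ U.erase u₁, glue s u₁ a (glue t u b c) from
          (Finset.sum_erase U (hvan₂ _ _ _ (hbc t ht u₁ hu₁) u₁
            (not_mem_union_erase T U t u₁ (Finset.disjoint_right.mp hTU hu₁)) s a)).symm]
        refine Finset.sum_congr rfl fun u₂ hu₂ => ?_
        exact hanti S _ d (e+f) a (glue t u₂ b c) ha
          (hbc t ht u₂ (Finset.mem_of_mem_erase hu₂)) s u₁
      rw [step1]
      simp only [Finset.sum_neg_distrib, ← Finset.smul_sum]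
      rw [reorder4 S U T (fun w x y z => glue x w (glue y z b c) a)]
    have hQ2 : ∑ t ∈ T, ∑ x ∈ S, ∑ u ∈ U, ∑ s ∈ S, glue t x b (glue u s c a)
        = -(((-1:k)^(e*(f+d))) • C) := by
      have step1 : ∑ t ∈ T, ∑ x ∈ S, ∑ u ∈ U, ∑ s ∈ S, glue t x b (glue u s c a)
          = ∑ t ∈ T, ∑ s₁ ∈ S, ∑ u ∈ U, ∑ s₂ ∈ S.erase s₁,
              -(((-1:k)^(e*(f+d))) • glue s₁ t (glue u s₂ c a) b) := by
        refine Finset.sum_congr rfl fun t ht => Finset.sum_congr rfl fun s₁ hs₁ =>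
          Finset.sum_congr rfl fun u hu => ?_
        rw [show (∑ s ∈ S, glue t s₁ b (glue u s c a))
            = ∑ s ∈ S.erase s₁, glue t s₁ b (glue u s c a) from
          (Finset.sum_erase S (hvan₂ _ _ _ (hca u hu s₁ hs₁) s₁
            (not_mem_union_erase U S u s₁ (Finset.disjoint_left.mp hSU hs₁)) t b)).symm]
        refine Finset.sum_congr rfl fun s₂ hs₂ => ?_
        exact hanti T _ e (f+d) b (glue u s₂ c a) hb
          (hca u hu s₂ (Finset.mem_of_mem_erase hs₂)) t s₁
      rw [step1]
      simp only [Finset.sum_neg_distrib, ← Finset.smul_sum]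
      rw [reorder4 T S U (fun w x y z => glue x w (glue y z c a) b)]
    have hR2 : ∑ u ∈ U, ∑ x ∈ T, ∑ s ∈ S, ∑ t ∈ T, glue u x c (glue s t a b)
        = -(((-1:k)^(f*(d+e))) • A) := by
      have step1 : ∑ u ∈ U, ∑ x ∈ T, ∑ s ∈ S, ∑ t ∈ T, glue u x c (glue s t a b)
          = ∑ u ∈ U, ∑ t₁ ∈ T, ∑ s ∈ S, ∑ t₂ ∈ T.erase t₁,
              -(((-1:k)^(f*(d+e))) • glue t₁ u (glue s t₂ a b) c) := by
        refine Finset.sum_congr rfl fun u hu => Finset.sum_congr rfl fun t₁ ht₁ =>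
          Finset.sum_congr rfl fun s hs => ?_
        rw [show (∑ t ∈ T, glue u t₁ c (glue s t a b))
            = ∑ t ∈ T.erase t₁, glue u t₁ c (glue s t a b) from
          (Finset.sum_erase T (hvan₂ _ _ _ (hab s hs t₁ ht₁) t₁
            (not_mem_union_erase S T s t₁ (Finset.disjoint_right.mp hST ht₁)) u c)).symm]
        refine Finset.sum_congr rfl fun t₂ ht₂ => ?_
        exact hanti U _ f (d+e) c (glue s t₂ a b) hc
          (hab s hs t₂ (Finset.mem_of_mem_erase ht₂)) u t₁
      rw [step1]
      simp only [Finset.sum_neg_distrib, ← Finset.smul_sum]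
      rw [reorder4 U T S (fun w x y z => glue x w (glue y z a b) c)]
    rw [expand1, expand2, expand3, hP1, hP2, hQ1, hQ2, hR1, hR2]
    have c1 : (-1:k)^(d*f) * (-1:k)^(d*(e+f)) = (-1:k)^(d*e) := by
      rw [haux]
      calc (-1:k)^(d*f + d*(e+f)) = (-1:k)^(d*e + 2*(d*f)) := by ring_nf
        _ = (-1:k)^(d*e) * (-1:k)^(2*(d*f)) := (haux _ _).symm
        _ = (-1:k)^(d*e) := by rw [hsq, mul_one]
    have c2 : (-1:k)^(d*e) * (-1:k)^(e*(f+d)) = (-1:k)^(f*e) := by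
      rw [haux]
      calc (-1:k)^(d*e + e*(f+d)) = (-1:k)^(f*e + 2*(d*e)) := by ring_nf
        _ = (-1:k)^(f*e) * (-1:k)^(2*(d*e)) := (haux _ _).symm
        _ = (-1:k)^(f*e) := by rw [hsq, mul_one]
    have c3 : (-1:k)^(f*e) * (-1:k)^(f*(d+e)) = (-1:k)^(d*f) := by
      rw [haux]
      calc (-1:k)^(f*e + f*(d+e)) = (-1:k)^(d*f + 2*(f*e)) := by ring_nf
        _ = (-1:k)^(d*f) * (-1:k)^(2*(f*e)) := (haux _ _).symm
        _ = (-1:k)^(d*f) := by rw [hsq, mul_one]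
    simp only [smul_add, smul_neg, smul_smul, c1, c2, c3]
    abel
end
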